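/- Let t > 0 and γ_t(θ) = -e^{-iθ} h_t(θ) with h_t(θ) = [arctan(t - cot θ) + arctan(cot θ)]/sin θ extended smoothly across multiples of π. Then Im[conj(γ_t'(θ)) γ_t''(θ)] < 0 for all θ ∈ (0, π). -/

import Mathlib

/-!
Write `h θ = ψ (cot θ) / sin θ` with `ψ x = arctan (t - x) + arctan x`, so that
`γ θ = -exp (-iθ) h θ`. Then `Im (conj γ' γ'') = h h'' - h² - 2 h'²`, and the map
`ψ ↦ ψ (cot θ) / sin θ` commutes with differentiation up to `ψ ↦ -((1 + x²) ψ' + x ψ)`,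
which turns this quantity into `-(2 ψ'² - ψ ψ'') / sin⁶ θ` evaluated at `x = cot θ`.
It remains to see `ψ ψ'' < 2 ψ'²`. This is clear when `ψ'' < 0`. Otherwise one of `x`, `t - x`
is negative, their product is below `1`, and the addition formula writes `ψ` as `arctan w`
with `w > 0`; replacing `ψ` by the larger `w = tan ψ` turns `2 ψ'² - ψ ψ''` into an explicitly
positive rational function.
-/

open Filter Topology ComplexConjugate

section Rotation

open Complex

lemma hasDerivAt_exp_neg_mul_I_mul {f : ℝ → ℂ} {f' : ℂ} {θ : ℝ} (hf : HasDerivAt f f' θ) :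
    HasDerivAt (fun θ : ℝ => exp (-θ * I) * f θ) (exp (-θ * I) * (f' - I * f θ)) θ := by
  have hexp : HasDerivAt (fun θ : ℝ => exp (-θ * I)) (exp (-θ * I) * (-1 * I)) θ :=
    ((hasDerivAt_id (θ : ℂ)).neg.mul_const I).cexp.comp_ofReal
  exact (hexp.mul hf).congr_deriv (by ring)

lemma conj_exp_neg_mul_I_mul_self (θ : ℝ) : conj (exp (-θ * I)) * exp (-θ * I) = 1 := by
  rw [conj_mul', ← ofReal_neg, norm_exp_ofReal_mul_I, ofReal_one, one_pow]

theorem im_conj_deriv_mul_deriv_deriv_neg_exp_mul {h h' : ℝ → ℝ} {h'' θ : ℝ}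
    (hh : ∀ᶠ y in 𝓝 θ, HasDerivAt h (h' y) y) (hh' : HasDerivAt h' h'' θ) :
    (conj (deriv (fun θ : ℝ => -exp (-θ * I) * h θ) θ) *
      deriv (deriv (fun θ : ℝ => -exp (-θ * I) * h θ)) θ).im
      = h θ * h'' - h θ ^ 2 - 2 * h' θ ^ 2 := by
  have hγ' : ∀ᶠ y : ℝ in 𝓝 θ, HasDerivAt (fun θ : ℝ => -exp (-θ * I) * h θ)
      (exp (-y * I) * (I * h y - h' y)) y := hh.mono fun y hy => by
    convert hasDerivAt_exp_neg_mul_I_mul hy.ofReal_comp.neg using 1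
    · ext θ; simp only [Pi.neg_apply]; ring
    · simp only [Pi.neg_apply]; ring
  have hγ'' : HasDerivAt (fun y : ℝ => exp (-y * I) * (I * h y - h' y))
      (exp (-θ * I) * (h θ - h'' + 2 * I * h' θ)) θ := by
    refine (hasDerivAt_exp_neg_mul_I_mul
      ((hh.self_of_nhds.ofReal_comp.const_mul I).sub hh'.ofReal_comp)).congr_deriv ?_
    simp only [Pi.sub_apply]
    linear_combination (-exp (-θ * I) * h θ) * I_sq
  have hderiv : deriv (fun θ : ℝ => -exp (-θ * I) * h θ) =ᶠ[𝓝 θ]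
      fun y : ℝ => exp (-y * I) * (I * h y - h' y) := hγ'.mono fun y hy => hy.deriv
  rw [hγ'.self_of_nhds.deriv, hderiv.deriv_eq, hγ''.deriv, map_mul, mul_mul_mul_comm,
    conj_exp_neg_mul_I_mul_self, one_mul]
  simp only [map_sub, map_mul, conj_I, conj_ofReal, mul_im, mul_re, add_re, add_im, sub_re,
    sub_im, neg_re, neg_im, I_re, I_im, ofReal_re, ofReal_im, re_ofNat, im_ofNat]
  ring

end Rotation

open Real

lemma hasDerivAt_cos_div_sin {θ : ℝ} (hs : sin θ ≠ 0) :
    HasDerivAt (fun θ => cos θ / sin θ) (-(1 + (cos θ / sin θ) ^ 2)) θ := by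
  refine ((hasDerivAt_cos θ).div (hasDerivAt_sin θ) hs).congr_deriv ?_
  field_simp
  ring

lemma one_add_cos_div_sin_sq {θ : ℝ} (hs : sin θ ≠ 0) :
    1 + (cos θ / sin θ) ^ 2 = (sin θ ^ 2)⁻¹ := by
  field_simp
  linear_combination sin_sq_add_cos_sq θ

lemma hasDerivAt_comp_cos_div_sin_div_sin {ψ : ℝ → ℝ} {ψ' θ : ℝ}
    (hψ : HasDerivAt ψ ψ' (cos θ / sin θ)) (hs : sin θ ≠ 0) :
    HasDerivAt (fun θ => ψ (cos θ / sin θ) / sin θ)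
      (-((1 + (cos θ / sin θ) ^ 2) * ψ' + cos θ / sin θ * ψ (cos θ / sin θ)) / sin θ) θ := by
  refine ((hψ.comp θ (hasDerivAt_cos_div_sin hs)).div (hasDerivAt_sin θ) hs).congr_deriv ?_
  simp only [Function.comp_apply]
  field_simp
  ring

theorem im_conj_deriv_mul_deriv_deriv_comp_cos_div_sin {ψ ψ' ψ'' : ℝ → ℝ}
    (hψ : ∀ x, HasDerivAt ψ (ψ' x) x) (hψ' : ∀ x, HasDerivAt ψ' (ψ'' x) x) {θ : ℝ}
    (hs : sin θ ≠ 0) :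
    (conj (deriv (fun θ : ℝ =>
        -Complex.exp (-θ * Complex.I) * ((ψ (cos θ / sin θ) / sin θ : ℝ) : ℂ)) θ) *
      deriv (deriv (fun θ : ℝ =>
        -Complex.exp (-θ * Complex.I) * ((ψ (cos θ / sin θ) / sin θ : ℝ) : ℂ))) θ).im
      = -(2 * ψ' (cos θ / sin θ) ^ 2 - ψ (cos θ / sin θ) * ψ'' (cos θ / sin θ)) / sin θ ^ 6 := by
  set φ : ℝ → ℝ := fun x => -((1 + x ^ 2) * ψ' x + x * ψ x) with hφ_def
  have hφ (x : ℝ) :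
      HasDerivAt φ (-((2 * x * ψ' x + (1 + x ^ 2) * ψ'' x) + (ψ x + x * ψ' x))) x := by
    refine ((((hasDerivAt_id x).pow 2).const_add 1).mul (hψ' x)).add
      ((hasDerivAt_id x).mul (hψ x)) |>.neg.congr_deriv ?_
    simp
  have hs_nhds : ∀ᶠ y in 𝓝 θ, sin y ≠ 0 := continuous_sin.continuousAt.eventually_ne hs
  rw [im_conj_deriv_mul_deriv_deriv_neg_exp_mul
    (hs_nhds.mono fun y hy => hasDerivAt_comp_cos_div_sin_div_sin (hψ _) hy)
    (hasDerivAt_comp_cos_div_sin_div_sin (hφ _) hs)]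
  have hx := one_add_cos_div_sin_sq hs
  generalize cos θ / sin θ = x at hx ⊢
  simp only [hφ_def]
  calc _ = -((1 + x ^ 2) ^ 2 * (2 * ψ' x ^ 2 - ψ x * ψ'' x)) / sin θ ^ 2 := by
        field_simp
        ring
    _ = _ := by
        rw [hx]
        field_simp

lemma arctan_le_self_of_nonneg {w : ℝ} (hw : 0 ≤ w) : arctan w ≤ w := by
  simpa only [tan_arctan] using le_tan (arctan_nonneg.mpr hw) (arctan_lt_pi_div_two w)

lemma arctan_add_arctan_pos {x y : ℝ} (hxy : 0 < x + y) : 0 < arctan x + arctan y := by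
  have := arctan_strictMono (show -x < y by linarith)
  rw [arctan_neg] at this
  linarith

lemma arctan_add_mul_lt_sq {x y : ℝ} (hxy : 0 < x + y) :
    (arctan x + arctan y) * -(x / (1 + x ^ 2) ^ 2 + y / (1 + y ^ 2) ^ 2)
      < ((1 + x ^ 2)⁻¹ - (1 + y ^ 2)⁻¹) ^ 2 := by
  have hψ := arctan_add_arctan_pos hxy
  set s := x / (1 + x ^ 2) ^ 2 + y / (1 + y ^ 2) ^ 2 with hs_def
  rcases lt_or_ge 0 s with hs | hs
  · nlinarith [sq_nonneg ((1 + x ^ 2)⁻¹ - (1 + y ^ 2)⁻¹)]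
  have hxy1 : x * y < 1 := by
    by_contra! h
    have hx : 0 < x := by nlinarith
    have hy : 0 < y := by nlinarith
    have : 0 < s := by positivity
    linarith
  have hden : 0 < 1 - x * y := by linarith
  have hw : 0 < (x + y) / (1 - x * y) := div_pos hxy hden
  have hbound : ((1 + x ^ 2)⁻¹ - (1 + y ^ 2)⁻¹) ^ 2 + (x + y) / (1 - x * y) * s
      = (x + y) ^ 2 / ((1 + x ^ 2) * (1 + y ^ 2) * (1 - x * y)) := by
    rw [hs_def]
    field_simp
    ring
  calc (arctan x + arctan y) * -s
      ≤ (x + y) / (1 - x * y) * -s := by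
        rw [arctan_add hxy1]
        exact mul_le_mul_of_nonneg_right (arctan_le_self_of_nonneg hw.le) (by linarith)
    _ < ((1 + x ^ 2)⁻¹ - (1 + y ^ 2)⁻¹) ^ 2 := by
        have : 0 < (x + y) ^ 2 / ((1 + x ^ 2) * (1 + y ^ 2) * (1 - x * y)) := by positivity
        linarith

lemma hasDerivAt_arctan_sub_add_arctan (t x : ℝ) :
    HasDerivAt (fun x => arctan (t - x) + arctan x)
      ((1 + x ^ 2)⁻¹ - (1 + (t - x) ^ 2)⁻¹) x := by
  refine (((hasDerivAt_id x).const_sub t).arctan.add (hasDerivAt_arctan x)).congr_deriv ?_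
  simp only [id]
  ring

lemma hasDerivAt_inv_one_add_sq_sub_inv (t x : ℝ) :
    HasDerivAt (fun x => (1 + x ^ 2)⁻¹ - (1 + (t - x) ^ 2)⁻¹)
      (-2 * (x / (1 + x ^ 2) ^ 2 + (t - x) / (1 + (t - x) ^ 2) ^ 2)) x := by
  have h₁ : HasDerivAt (fun x : ℝ => 1 + x ^ 2) (2 * x) x := by
    simpa using (hasDerivAt_pow 2 x).const_add 1
  have h₂ : HasDerivAt (fun x : ℝ => 1 + (t - x) ^ 2) (-(2 * (t - x))) x := by
    simpa using ((hasDerivAt_pow 2 (t - x)).comp x ((hasDerivAt_id x).const_sub t)).const_add 1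
  refine ((h₁.inv (by positivity)).sub (h₂.inv (by positivity))).congr_deriv ?_
  field_simp
  ring

theorem gamma_curvature_negative (t : ℝ) (ht : 0 < t) (θ : ℝ)
    (hθ : θ ∈ Set.Ioo 0 Real.pi) :
    ((starRingEnd ℂ)
        (deriv (fun θ : ℝ => -Complex.exp (-(θ : ℂ) * Complex.I) *
          (((Real.arctan (t - Real.cos θ / Real.sin θ) +
            Real.arctan (Real.cos θ / Real.sin θ)) / Real.sin θ : ℝ) : ℂ)) θ) *
      deriv (deriv (fun θ : ℝ => -Complex.exp (-(θ : ℂ) * Complex.I) *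
          (((Real.arctan (t - Real.cos θ / Real.sin θ) +
            Real.arctan (Real.cos θ / Real.sin θ)) / Real.sin θ : ℝ) : ℂ))) θ).im
      < 0 := by
  have hs : 0 < sin θ := sin_pos_of_pos_of_lt_pi hθ.1 hθ.2
  rw [im_conj_deriv_mul_deriv_deriv_comp_cos_div_sin (hasDerivAt_arctan_sub_add_arctan t)
    (hasDerivAt_inv_one_add_sq_sub_inv t) hs.ne']
  have hconvex :=
    arctan_add_mul_lt_sq (x := cos θ / sin θ) (y := t - cos θ / sin θ) (by linarith)
  refine div_neg_of_neg_of_pos ?_ (by positivity)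
  linarith
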